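/- For every real q>1, every n≥1 and every x∈[0,∞), the fourth central moment of the q-Szász operator is M_{n,q}((t−x)^4;x) = x/[n]_q^3 + (q^2+3q−1)x^2/[n]_q^2 + (q−1)^2 x^3/[n]_q. -/

import Mathlib

open scoped BigOperators

/-- The `q`-integer `[k]_q = (q^k - 1)/(q - 1)`. -/
noncomputable def qNat (q : ℝ) (k : ℕ) : ℝ := (q ^ k - 1) / (q - 1)

/-- The `q`-factorial `[k]_q! = [1]_q [2]_q ⋯ [k]_q`, with `[0]_q! = 1`. -/
noncomputable def qFactorial (q : ℝ) : ℕ → ℝ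
  | 0 => 1
  | k + 1 => qFactorial q k * qNat q (k + 1)

/-- The `q`-exponential function `e_q(z) = ∑_{k=0}^∞ z^k/[k]_q!`. -/
noncomputable def qExp (q z : ℝ) : ℝ := ∑' k : ℕ, z ^ k / qFactorial q k

/-- The `q`-Szász basis function
`s_{n,k}(q;x) = q^{-k(k-1)/2} ([n]_q^k x^k/[k]_q!) e_q(-[n]_q q^{-k} x)`. -/
noncomputable def qSzaszBasis (q : ℝ) (n k : ℕ) (x : ℝ) : ℝ :=
  (q ^ (k * (k - 1) / 2))⁻¹ * (qNat q n ^ k * x ^ k / qFactorial q k) *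
    qExp q (-(qNat q n) * q ^ (-(k : ℤ)) * x)

/-- The `q`-Szász operator `M_{n,q}(f;x) = ∑_{k=0}^∞ f([k]_q/[n]_q) s_{n,k}(q;x)`. -/
noncomputable def qSzasz (q : ℝ) (n : ℕ) (f : ℝ → ℝ) (x : ℝ) : ℝ :=
  ∑' k : ℕ, f (qNat q k / qNat q n) * qSzaszBasis q n k x

/-- The weight `w_0(x) = 1`, `w_p(x) = (1 + x^p)⁻¹` for `p ≥ 1`. -/
noncomputable def weight (p : ℕ) (x : ℝ) : ℝ := if p = 0 then 1 else (1 + x ^ p)⁻¹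

/-- The weighted sup-norm `‖f‖_p = sup_{x ≥ 0} w_p(x)|f(x)|`. -/
noncomputable def wnorm (p : ℕ) (f : ℝ → ℝ) : ℝ :=
  ⨆ x : Set.Ici (0 : ℝ), weight p x.1 * |f x.1|

/-- Membership in the space `C_p`: `f` is continuous on `[0,∞)` and `w_p f` is
uniformly continuous and bounded on `[0,∞)`. -/
def MemCp (p : ℕ) (f : ℝ → ℝ) : Prop :=
  ContinuousOn f (Set.Ici 0) ∧
  UniformContinuousOn (fun x => weight p x * f x) (Set.Ici 0) ∧
  ∃ M : ℝ, ∀ x ∈ Set.Ici (0 : ℝ), |weight p x * f x| ≤ M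

/-- The second difference `Δ_h² f(x) = f(x+2h) - 2f(x+h) + f(x)`. -/
noncomputable def delta2 (f : ℝ → ℝ) (h x : ℝ) : ℝ := f (x + 2 * h) - 2 * f (x + h) + f x

/-- The second modulus of smoothness `ω_p²(f;δ) = sup_{0<h≤δ} ‖Δ_h² f‖_p`. -/
noncomputable def omega2 (p : ℕ) (f : ℝ → ℝ) (δ : ℝ) : ℝ :=
  ⨆ h : {h : ℝ // 0 < h ∧ h ≤ δ}, wnorm p (fun x => delta2 f h.1 x)

/-- The (first) modulus of continuity on `[0,∞)`:
`ω(g;δ) = sup {|g(s)-g(t)| : s,t ≥ 0, |s-t| ≤ δ}`. -/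
noncomputable def omega1 (g : ℝ → ℝ) (δ : ℝ) : ℝ :=
  sSup {d : ℝ | ∃ s t : ℝ, 0 ≤ s ∧ 0 ≤ t ∧ |s - t| ≤ δ ∧ d = |g s - g t|}

/-- The `q`-derivative `(D_q g)(x) = (g(qx) - g(x))/((q-1)x)`. -/
noncomputable def qDeriv (q : ℝ) (g : ℝ → ℝ) (x : ℝ) : ℝ := (g (q * x) - g x) / ((q - 1) * x)

/-- The `q`-Stirling-type numbers: `S_q(0,0)=1`, `S_q(m,0)=0` for `m>0`,
`S_q(m,j)=0` for `m<j`, and `S_q(m+1,j)=[j]_q S_q(m,j) + S_q(m,j-1)`. -/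
noncomputable def qStirling (q : ℝ) : ℕ → ℕ → ℝ
  | 0, 0 => 1
  | 0, _ + 1 => 0
  | _ + 1, 0 => 0
  | m + 1, j + 1 => qNat q (j + 1) * qStirling q m (j + 1) + qStirling q m j

/-!
Writing `a = [n]_q x`, the basis function is `s_k = q^{-k(k-1)/2} a^k/[k]_q! · e_q(-a q^{-k})`.
Expanding `e_q` and regrouping the absolutely convergent double series along `k + j = N` turns
`∑_k c^k s_k` into `∑_N q^{-N(N-1)/2} a^N/[N]_q! · ∏_{i<N} (c - q^i)` by the Gauss q-binomial
theorem. For `c = q^r` the product vanishes once `N > r`, so the moments `∑_k q^{rk} s_k` are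
polynomials in `a`. Since `[k]_q/[n]_q - x = (q^k - 1 - (q-1)a)/((q-1)[n]_q)`, the fourth central
moment is a binomial combination of the moments with `r ≤ 4`.
-/

open Finset

theorem Nat.triangle_add (j k : ℕ) :
    (j + k) * (j + k - 1) / 2 = j * (j - 1) / 2 + k * (k - 1) / 2 + j * k := by
  induction k with
  | zero => simp
  | succ k ih => rw [← add_assoc, Nat.triangle_succ, ih, Nat.triangle_succ]; ring

theorem HasSum.sum_antidiagonal {α : Type*} [AddCommGroup α] [UniformSpace α]
    [IsUniformAddGroup α] [CompleteSpace α] [T2Space α] {f : ℕ × ℕ → α} {a : α}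
    (hf : HasSum f a) : HasSum (fun N ↦ ∑ p ∈ antidiagonal N, f p) a := by
  have hfib (N : ℕ) : (fun p : ℕ × ℕ ↦ p.1 + p.2) ⁻¹' {N} = (antidiagonal N : Set (ℕ × ℕ)) := by
    ext p; simp
  convert hf.tsum_fiberwise (fun p : ℕ × ℕ ↦ p.1 + p.2) using 2 with N
  rw [← Finset.tsum_subtype]
  exact ((Equiv.setCongr (hfib N)).tsum_eq (f ∘ Subtype.val)).symm

section QAnalogues

variable {q : ℝ}

@[simp] theorem qNat_zero (q : ℝ) : qNat q 0 = 0 := by simp [qNat]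

theorem qNat_add (hq : q ≠ 1) (j k : ℕ) : qNat q (j + k) = qNat q j + q ^ j * qNat q k := by
  have : q - 1 ≠ 0 := sub_ne_zero.mpr hq
  simp only [qNat]
  field_simp
  ring

theorem qNat_succ (hq : q ≠ 1) (k : ℕ) : qNat q (k + 1) = qNat q k + q ^ k := by
  have : qNat q 1 = 1 := by simpa [qNat] using div_self (sub_ne_zero.mpr hq)
  rw [qNat_add hq, this, mul_one]

theorem natCast_le_qNat (hq : 1 < q) (k : ℕ) : (k : ℝ) ≤ qNat q k := by
  induction k with
  | zero => simp
  | succ k ih =>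
    rw [qNat_succ hq.ne', Nat.cast_succ]
    exact add_le_add ih (one_le_pow₀ hq.le)

theorem qNat_pos (hq : 1 < q) {k : ℕ} (hk : 0 < k) : 0 < qNat q k :=
  (Nat.cast_pos.mpr hk).trans_le (natCast_le_qNat hq k)

theorem qFactorial_succ (q : ℝ) (k : ℕ) :
    qFactorial q (k + 1) = qFactorial q k * qNat q (k + 1) :=
  rfl

theorem factorial_le_qFactorial (hq : 1 < q) (k : ℕ) : (k.factorial : ℝ) ≤ qFactorial q k := by
  induction k with
  | zero => simp [qFactorial]
  | succ k ih =>
    rw [Nat.factorial_succ, Nat.cast_mul, mul_comm, qFactorial_succ]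
    exact mul_le_mul ih (natCast_le_qNat hq _) (Nat.cast_nonneg _) ((Nat.cast_nonneg _).trans ih)

theorem qFactorial_pos (hq : 1 < q) (k : ℕ) : 0 < qFactorial q k :=
  (Nat.cast_pos.mpr k.factorial_pos).trans_le (factorial_le_qFactorial hq k)

theorem summable_pow_div_qFactorial (hq : 1 < q) (z : ℝ) :
    Summable fun k ↦ z ^ k / qFactorial q k := by
  refine .of_norm_bounded (Real.summable_pow_div_factorial |z|) fun k ↦ ?_
  rw [norm_div, norm_pow, Real.norm_eq_abs, Real.norm_of_nonneg (qFactorial_pos hq k).le]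
  gcongr
  exact factorial_le_qFactorial hq k

theorem hasSum_qExp (hq : 1 < q) (z : ℝ) :
    HasSum (fun k ↦ z ^ k / qFactorial q k) (qExp q z) :=
  (summable_pow_div_qFactorial hq z).hasSum

theorem qNat_mul_sum_antidiagonal_succ (hq : 1 < q) (N : ℕ) (b c : ℝ) :
    qNat q (N + 1) * ∑ p ∈ antidiagonal (N + 1), c ^ p.1 / qFactorial q p.1 *
        ((-b) ^ p.2 * q ^ (p.2 * (p.2 - 1) / 2) / qFactorial q p.2) =
      (c - b) * ∑ p ∈ antidiagonal N, c ^ p.1 / qFactorial q p.1 *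
        ((-(q * b)) ^ p.2 * q ^ (p.2 * (p.2 - 1) / 2) / qFactorial q p.2) := by
  have hF (k : ℕ) : qFactorial q k ≠ 0 := (qFactorial_pos hq k).ne'
  have hN (k : ℕ) : qNat q (k + 1) ≠ 0 := (qNat_pos hq k.succ_pos).ne'
  set f : ℕ × ℕ → ℝ := fun p ↦
    c ^ p.1 / qFactorial q p.1 * ((-b) ^ p.2 * q ^ (p.2 * (p.2 - 1) / 2) / qFactorial q p.2)
  -- Split `[k + j] = [j] + q^j [k]`; the first part lowers `j`, the second lowers `k`.
  have hsplit : qNat q (N + 1) * ∑ p ∈ antidiagonal (N + 1), f p =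
      ∑ p ∈ antidiagonal (N + 1), qNat q p.2 * f p +
        ∑ p ∈ antidiagonal (N + 1), q ^ p.2 * qNat q p.1 * f p := by
    rw [mul_sum, ← sum_add_distrib]
    refine sum_congr rfl fun p hp ↦ ?_
    rw [← mem_antidiagonal.mp hp, add_comm, qNat_add hq.ne']
    ring
  rw [hsplit, Nat.sum_antidiagonal_succ', Nat.sum_antidiagonal_succ]
  simp only [qNat_zero, zero_mul, mul_zero, zero_add, ← sum_add_distrib, mul_sum]
  refine sum_congr rfl fun p _ ↦ ?_
  simp only [f, Nat.triangle_succ, qFactorial_succ]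
  field_simp [hF, hN]
  ring

theorem prod_sub_mul_qpow_div_qFactorial (hq : 1 < q) (N : ℕ) (b c : ℝ) :
    (∏ i ∈ range N, (c - b * q ^ i)) / qFactorial q N = ∑ p ∈ antidiagonal N,
      c ^ p.1 / qFactorial q p.1 * ((-b) ^ p.2 * q ^ (p.2 * (p.2 - 1) / 2) / qFactorial q p.2) := by
  induction N generalizing b with
  | zero => simp [qFactorial]
  | succ N ih =>
    have hN := (qNat_pos hq N.succ_pos).ne'
    have hprod : ∏ i ∈ range (N + 1), (c - b * q ^ i) =
        (c - b) * ∏ i ∈ range N, (c - q * b * q ^ i) := by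
      rw [prod_range_succ', pow_zero, mul_one, mul_comm]
      exact congrArg _ (prod_congr rfl fun i _ ↦ by ring)
    rw [← mul_right_inj' hN, qNat_mul_sum_antidiagonal_succ hq, ← ih, hprod, qFactorial_succ]
    field_simp

end QAnalogues

section QSzaszMoments

variable {q : ℝ}

theorem norm_qSzasz_term_le (hq : 1 < q) (n : ℕ) (x c : ℝ) (k j : ℕ) :
    ‖c ^ k * ((q ^ (k * (k - 1) / 2))⁻¹ * (qNat q n ^ k * x ^ k / qFactorial q k)) *
      ((-(qNat q n) * q ^ (-(k : ℤ)) * x) ^ j / qFactorial q j)‖ ≤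
      |c * (qNat q n * x)| ^ k / qFactorial q k * (|qNat q n * x| ^ j / qFactorial q j) := by
  have hq0 : 0 < q := by linarith
  have hF := qFactorial_pos hq k
  have hF' := qFactorial_pos hq j
  have h1 : (q ^ (k * (k - 1) / 2))⁻¹ ≤ 1 := inv_le_one_of_one_le₀ (one_le_pow₀ hq.le)
  have h2 : |q ^ (-(k : ℤ))| ^ j ≤ 1 := by
    rw [abs_of_pos (zpow_pos hq0 _)]
    exact pow_le_one₀ (zpow_pos hq0 _).le (zpow_le_one_of_nonpos₀ hq.le (by omega))
  have hw : (q ^ (k * (k - 1) / 2))⁻¹ * |q ^ (-(k : ℤ))| ^ j ≤ 1 :=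
    mul_le_one₀ h1 (by positivity) h2
  rw [Real.norm_eq_abs]
  simp only [abs_mul, abs_div, abs_pow, abs_inv, abs_neg, abs_of_pos hF, abs_of_pos hF',
    abs_of_pos (pow_pos hq0 _), mul_pow]
  calc _ = |c| ^ k * (|qNat q n| ^ k * |x| ^ k) / qFactorial q k *
          (|qNat q n| ^ j * |x| ^ j / qFactorial q j) *
          ((q ^ (k * (k - 1) / 2))⁻¹ * |q ^ (-(k : ℤ))| ^ j) := by ring
    _ ≤ _ := mul_le_of_le_one_right (by positivity) hw

theorem qSzasz_term_eq (hq : q ≠ 0) (n : ℕ) (x c : ℝ) (k j : ℕ) :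
    c ^ k * ((q ^ (k * (k - 1) / 2))⁻¹ * (qNat q n ^ k * x ^ k / qFactorial q k)) *
      ((-(qNat q n) * q ^ (-(k : ℤ)) * x) ^ j / qFactorial q j) =
    (q ^ ((k + j) * (k + j - 1) / 2))⁻¹ * (qNat q n * x) ^ (k + j) *
      (c ^ k / qFactorial q k * ((-1) ^ j * q ^ (j * (j - 1) / 2) / qFactorial q j)) := by
  rw [Nat.triangle_add, zpow_neg, zpow_natCast, pow_add, pow_add, pow_mul]
  simp only [mul_pow, inv_pow]
  field_simp
  ring

theorem hasSum_pow_mul_qSzaszBasis (hq : 1 < q) (n : ℕ) (x c : ℝ) :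
    HasSum (fun k ↦ c ^ k * qSzaszBasis q n k x) (∑' N, (q ^ (N * (N - 1) / 2))⁻¹ *
      (∏ i ∈ range N, (c - q ^ i)) * (qNat q n * x) ^ N / qFactorial q N) := by
  set T : ℕ × ℕ → ℝ := fun p ↦
    c ^ p.1 * ((q ^ (p.1 * (p.1 - 1) / 2))⁻¹ * (qNat q n ^ p.1 * x ^ p.1 / qFactorial q p.1)) *
      ((-(qNat q n) * q ^ (-(p.1 : ℤ)) * x) ^ p.2 / qFactorial q p.2)
  have hsum : Summable T := by
    have hF (z : ℝ) : Summable fun k ↦ |z| ^ k / qFactorial q k :=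
      summable_pow_div_qFactorial hq |z|
    have hF_nonneg (z : ℝ) (k : ℕ) : 0 ≤ |z| ^ k / qFactorial q k :=
      div_nonneg (by positivity) (qFactorial_pos hq k).le
    exact .of_norm_bounded ((hF _).mul_of_nonneg (hF _) (hF_nonneg _) (hF_nonneg _))
      fun p ↦ norm_qSzasz_term_le hq n x c p.1 p.2
  have hrow (k : ℕ) : HasSum (fun j ↦ T (k, j)) (c ^ k * qSzaszBasis q n k x) := by
    rw [qSzaszBasis, ← mul_assoc]
    exact (hasSum_qExp hq _).mul_left _
  have hdiag (N : ℕ) : ∑ p ∈ antidiagonal N, T p = (q ^ (N * (N - 1) / 2))⁻¹ *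
      (∏ i ∈ range N, (c - q ^ i)) * (qNat q n * x) ^ N / qFactorial q N := by
    calc ∑ p ∈ antidiagonal N, T p
        = ∑ p ∈ antidiagonal N, (q ^ (N * (N - 1) / 2))⁻¹ * (qNat q n * x) ^ N *
            (c ^ p.1 / qFactorial q p.1 *
              ((-1) ^ p.2 * q ^ (p.2 * (p.2 - 1) / 2) / qFactorial q p.2)) :=
          sum_congr rfl fun p hp ↦ by
            rw [← mem_antidiagonal.mp hp]; exact qSzasz_term_eq (by positivity) n x c p.1 p.2
      _ = (q ^ (N * (N - 1) / 2))⁻¹ * (qNat q n * x) ^ N *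
            ((∏ i ∈ range N, (c - 1 * q ^ i)) / qFactorial q N) := by
          rw [← mul_sum, prod_sub_mul_qpow_div_qFactorial hq]
      _ = _ := by simp only [one_mul]; ring
  have hdiag_sum := hsum.hasSum.sum_antidiagonal
  simp only [hdiag] at hdiag_sum
  rw [hdiag_sum.tsum_eq]
  exact hsum.hasSum.prod_fiberwise hrow

theorem hasSum_qpow_mul_qSzaszBasis (hq : 1 < q) (n r : ℕ) (x : ℝ) :
    HasSum (fun k ↦ (q ^ r) ^ k * qSzaszBasis q n k x) (∑ N ∈ range (r + 1),
      (q ^ (N * (N - 1) / 2))⁻¹ * (∏ i ∈ range N, (q ^ r - q ^ i)) * (qNat q n * x) ^ N /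
        qFactorial q N) := by
  have h := hasSum_pow_mul_qSzaszBasis hq n x (q ^ r)
  rwa [tsum_eq_sum fun N hN ↦ ?_] at h
  rw [prod_eq_zero (i := r) (by simpa using hN) (sub_self _)]
  simp

theorem qNat_div_sub_pow_eq_sum (hq : 1 < q) {n : ℕ} (hn : 0 < n) (x : ℝ) (k m : ℕ) :
    (qNat q k / qNat q n - x) ^ m = ∑ r ∈ range (m + 1), (q ^ r) ^ k *
      ((-(1 + (q - 1) * (qNat q n * x))) ^ (m - r) * m.choose r / ((q - 1) * qNat q n) ^ m) := by
  have hA : qNat q n ≠ 0 := (qNat_pos hq hn).ne'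
  have hq1 : q - 1 ≠ 0 := sub_ne_zero.mpr hq.ne'
  have hshift : qNat q k / qNat q n - x =
      (q ^ k + -(1 + (q - 1) * (qNat q n * x))) / ((q - 1) * qNat q n) := by
    rw [show qNat q k = (q ^ k - 1) / (q - 1) from rfl]
    field_simp
    ring
  rw [hshift, div_pow, add_pow, sum_div]
  refine sum_congr rfl fun r _ ↦ ?_
  rw [← pow_mul, pow_mul']
  ring

theorem hasSum_qSzasz_central_moment (hq : 1 < q) {n : ℕ} (hn : 0 < n) (x : ℝ) (m : ℕ) :
    HasSum (fun k ↦ (qNat q k / qNat q n - x) ^ m * qSzaszBasis q n k x)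
      (∑ r ∈ range (m + 1), (∑ N ∈ range (r + 1), (q ^ (N * (N - 1) / 2))⁻¹ *
        (∏ i ∈ range N, (q ^ r - q ^ i)) * (qNat q n * x) ^ N / qFactorial q N) *
          ((-(1 + (q - 1) * (qNat q n * x))) ^ (m - r) * m.choose r /
            ((q - 1) * qNat q n) ^ m)) := by
  refine (hasSum_sum fun r (_ : r ∈ range (m + 1)) ↦
    (hasSum_qpow_mul_qSzaszBasis hq n r x).mul_right
      ((-(1 + (q - 1) * (qNat q n * x))) ^ (m - r) * m.choose r / ((q - 1) * qNat q n) ^ m)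
    ).congr_fun fun k ↦ ?_
  rw [qNat_div_sub_pow_eq_sum hq hn, sum_mul]
  exact sum_congr rfl fun r _ ↦ by ring

end QSzaszMoments

theorem qSzasz_central_moment_four_general (q : ℝ) (hq : 1 < q) (n : ℕ) (hn : 1 ≤ n)
    (x : ℝ) :
    qSzasz q n (fun t => (t - x) ^ 4) x =
      x / qNat q n ^ 3 + (q ^ 2 + 3 * q - 1) * x ^ 2 / qNat q n ^ 2 +
        (q - 1) ^ 2 * x ^ 3 / qNat q n := by
  have hA : qNat q n ≠ 0 := (qNat_pos hq hn).ne'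
  have hq1 : q - 1 ≠ 0 := sub_ne_zero.mpr hq.ne'
  rw [qSzasz, (hasSum_qSzasz_central_moment hq hn x 4).tsum_eq]
  simp only [sum_range_succ, sum_range_zero, prod_range_succ, prod_range_zero,
    qNat_succ hq.ne', qNat_zero, qFactorial]
  norm_num [Nat.choose]
  field_simp
  ring

/-- fourth central moment
`M_{n,q}((t-x)⁴;x) = x/[n]_q³ + (q²+3q-1)x²/[n]_q² + (q-1)²x³/[n]_q`. -/
theorem qSzasz_central_moment_four (q : ℝ) (hq : 1 < q) (n : ℕ) (hn : 1 ≤ n)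
    (x : ℝ) (hx : 0 ≤ x) :
    qSzasz q n (fun t => (t - x) ^ 4) x =
      x / qNat q n ^ 3 + (q ^ 2 + 3 * q - 1) * x ^ 2 / qNat q n ^ 2 +
        (q - 1) ^ 2 * x ^ 3 / qNat q n :=
  qSzasz_central_moment_four_general q hq n hn x
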